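/- arXiv:2210.12668 — 3 statements merged into one kernel-verified Lean document; each statement's English description precedes it below -/
import Mathlib

section
/- Let c ≥ 2 and 0 ≤ d ≤ c be integers, set e = c−d+1, and let S be a polynomial ring over k in c+d+1 variables. If I and J are homogeneous ideals of S that both have KW type ((1,1,…,1); (e)), with d parts equal to 1 in the first partition and a single part e in the second, then there exists a k-algebra automorphism φ of S mapping the space of homogeneous linear forms bijectively onto itself such that φ(I) = J. -/
/-
The substitution `z₁ ↦ z₁ - δ z₀` in every scroll block `(z₀; z₁)` of size 1 fixes the
Jordan blocks and turns the matrix with eigenvalues `ε` into the matrix with eigenvalues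
`ε + δ` minus `δ` times its first row; so it carries the ideal of 2×2 minors for `ε` to the
one for `ε + δ`. With a single Jordan block, any eigenvalue can be moved to any other.
-/

open MvPolynomial

/-- Variables of the canonical Kronecker–Weierstrass concatenation: the `i`-th scroll
block of size `lam i` uses the `lam i + 1` variables `Sum.inl ⟨i, ·⟩`, and the `i`-th
Jordan block of size `mu i` uses the `mu i` variables `Sum.inr ⟨i, ·⟩`. -/
abbrev KWVars {d e : ℕ} (lam : Fin d → ℕ) (mu : Fin e → ℕ) : Type :=
  (Σ i : Fin d, Fin (lam i + 1)) ⊕ (Σ i : Fin e, Fin (mu i))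

/-- Columns of the canonical Kronecker–Weierstrass concatenation. -/
abbrev KWCols {d e : ℕ} (lam : Fin d → ℕ) (mu : Fin e → ℕ) : Type :=
  (Σ i : Fin d, Fin (lam i)) ⊕ (Σ i : Fin e, Fin (mu i))

/-- First-row entry of the concatenated matrix. -/
noncomputable def KWrow0 (k : Type) [Field k] {d e : ℕ} (lam : Fin d → ℕ) (mu : Fin e → ℕ) :
    KWCols lam mu → MvPolynomial (KWVars lam mu) k
  | .inl ⟨i, j⟩ => X (.inl ⟨i, j.castSucc⟩)
  | .inr ⟨i, j⟩ => X (.inr ⟨i, j⟩)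

/-- Second-row entry of the concatenated matrix, with eigenvalues `ε`. -/
noncomputable def KWrow1 (k : Type) [Field k] {d e : ℕ} (lam : Fin d → ℕ) (mu : Fin e → ℕ)
    (ε : Fin e → k) : KWCols lam mu → MvPolynomial (KWVars lam mu) k
  | .inl ⟨i, j⟩ => X (.inl ⟨i, j.succ⟩)
  | .inr ⟨i, j⟩ =>
      (if h : (j : ℕ) + 1 < mu i then X (.inr ⟨i, ⟨(j : ℕ) + 1, h⟩⟩) else 0)
        + C (ε i) * X (.inr ⟨i, j⟩)

/-- The ideal of 2×2 minors of the canonical concatenation of scroll blocks of sizes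
`lam` and Jordan blocks of sizes `mu` with eigenvalues `ε`. -/
noncomputable def kwIdeal (k : Type) [Field k] {d e : ℕ} (lam : Fin d → ℕ)
    (mu : Fin e → ℕ) (ε : Fin e → k) : Ideal (MvPolynomial (KWVars lam mu) k) :=
  Ideal.span {f | ∃ p q : KWCols lam mu,
    f = KWrow0 k lam mu p * KWrow1 k lam mu ε q - KWrow1 k lam mu ε p * KWrow0 k lam mu q}

/-- A homogeneous ideal `I` of `S = k[z_1,…,z_N]` has Kronecker–Weierstrass type
`(lam; mu)` if there is a `k`-algebra isomorphism `ψ` of `S` with the polynomial ring on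
the block variables, mapping linear forms bijectively onto linear forms (equivalently, a
linear automorphism of `S` followed by a relabelling of the variables by block
positions), carrying `I` to the ideal of 2×2 minors of a concatenation of scroll blocks
of sizes `lam` and Jordan blocks of sizes `mu` with pairwise distinct eigenvalues. -/
def HasKWType (k : Type) [Field k] (N : ℕ) {d e : ℕ} (lam : Fin d → ℕ) (mu : Fin e → ℕ)
    (I : Ideal (MvPolynomial (Fin N) k)) : Prop :=
  ∃ ε : Fin e → k, Function.Injective ε ∧
    ∃ ψ : MvPolynomial (Fin N) k ≃ₐ[k] MvPolynomial (KWVars lam mu) k,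
      (∀ f, f.IsHomogeneous 1 → (ψ f).IsHomogeneous 1) ∧
      (∀ g, MvPolynomial.IsHomogeneous g 1 → (ψ.symm g).IsHomogeneous 1) ∧
      Ideal.map (ψ : MvPolynomial (Fin N) k →+* MvPolynomial (KWVars lam mu) k) I
        = kwIdeal k lam mu ε

def AlgEquiv.PreservesLinearForms {k σ τ : Type*} [CommSemiring k]
    (φ : MvPolynomial σ k ≃ₐ[k] MvPolynomial τ k) : Prop :=
  (∀ f, f.IsHomogeneous 1 → (φ f).IsHomogeneous 1) ∧
    ∀ g, g.IsHomogeneous 1 → (φ.symm g).IsHomogeneous 1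

namespace AlgEquiv.PreservesLinearForms

variable {k σ τ υ : Type*} [CommSemiring k] {φ : MvPolynomial σ k ≃ₐ[k] MvPolynomial τ k}
  {ψ : MvPolynomial τ k ≃ₐ[k] MvPolynomial υ k}

lemma symm (hφ : φ.PreservesLinearForms) : φ.symm.PreservesLinearForms :=
  ⟨hφ.2, hφ.1⟩

lemma trans (hφ : φ.PreservesLinearForms) (hψ : ψ.PreservesLinearForms) :
    (φ.trans ψ).PreservesLinearForms :=
  ⟨fun f hf => hψ.1 _ (hφ.1 f hf), fun g hg => hφ.2 _ (hψ.2 g hg)⟩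

lemma of_aeval {g : σ → MvPolynomial τ k} {g' : τ → MvPolynomial σ k}
    (hg : ∀ i, (g i).IsHomogeneous 1) (hg' : ∀ i, (g' i).IsHomogeneous 1)
    (hφ : ∀ f, φ f = aeval g f) (hφ' : ∀ f, φ.symm f = aeval g' f) :
    φ.PreservesLinearForms :=
  ⟨fun f hf => by simpa [hφ] using hf.aeval g hg,
    fun f hf => by simpa [hφ'] using hf.aeval g' hg'⟩

end AlgEquiv.PreservesLinearForms

section Orbit

variable {k σ τ : Type*} [CommSemiring k]

lemma exists_preservesLinearForms_map_eq {I J : Ideal (MvPolynomial σ k)}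
    {ψI ψJ : MvPolynomial σ k ≃ₐ[k] MvPolynomial τ k}
    {θ : MvPolynomial τ k ≃ₐ[k] MvPolynomial τ k}
    (hψI : ψI.PreservesLinearForms) (hψJ : ψJ.PreservesLinearForms)
    (hθ : θ.PreservesLinearForms) (hIJ : (I.map ψI).map θ = J.map ψJ) :
    ∃ φ : MvPolynomial σ k ≃ₐ[k] MvPolynomial σ k,
      φ.PreservesLinearForms ∧ I.map φ = J := by
  refine ⟨ψI.trans (θ.trans ψJ.symm), hψI.trans (hθ.trans hψJ.symm), ?_⟩
  rw [← Ideal.map_coe, AlgEquiv.toRingHom_trans, AlgEquiv.toRingHom_trans, ← Ideal.map_map,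
    ← Ideal.map_map]
  simp only [Ideal.map_coe]
  rw [hIJ]
  exact Ideal.map_of_equiv (ψJ : MvPolynomial σ k ≃+* MvPolynomial τ k)

end Orbit

section EigenvalueShift

variable {k : Type} [Field k] {d e : ℕ} {mu : Fin e → ℕ}

noncomputable def kwShiftVar (δ : k) :
    KWVars (fun _ : Fin d => 1) mu → MvPolynomial (KWVars (fun _ : Fin d => 1) mu) k
  | .inl ⟨i, 0⟩ => X (.inl ⟨i, 0⟩)
  | .inl ⟨i, 1⟩ => X (.inl ⟨i, 1⟩) - C δ * X (.inl ⟨i, 0⟩)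
  | .inr v => X (.inr v)

@[simp] lemma kwShiftVar_inl_zero (δ : k) (i : Fin d) :
    kwShiftVar (mu := mu) δ (.inl ⟨i, 0⟩) = X (.inl ⟨i, 0⟩) := rfl

@[simp] lemma kwShiftVar_inl_one (δ : k) (i : Fin d) :
    kwShiftVar (mu := mu) δ (.inl ⟨i, 1⟩) = X (.inl ⟨i, 1⟩) - C δ * X (.inl ⟨i, 0⟩) :=
  rfl

@[simp] lemma kwShiftVar_inr (δ : k) (v : Σ i : Fin e, Fin (mu i)) :
    kwShiftVar (d := d) δ (.inr v) = X (.inr v) := rfl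

lemma kwShiftVar_zero : kwShiftVar (d := d) (mu := mu) (0 : k) = X := by
  funext v
  rcases v with ⟨i, j⟩ | v
  · fin_cases j <;> simp
  · simp

lemma isHomogeneous_kwShiftVar (δ : k) (v : KWVars (fun _ : Fin d => 1) mu) :
    (kwShiftVar δ v).IsHomogeneous 1 := by
  rcases v with ⟨i, j⟩ | v
  · fin_cases j
    · exact isHomogeneous_X _ _
    · exact (isHomogeneous_X _ _).sub (by simpa using (isHomogeneous_X k _).C_mul δ)
  · exact isHomogeneous_X _ _

lemma aeval_kwShiftVar_comp (δ δ' : k) :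
    (aeval (kwShiftVar (d := d) (mu := mu) δ)).comp (aeval (kwShiftVar δ')) =
      aeval (kwShiftVar (δ + δ')) := by
  ext (⟨i, j⟩ | v) : 1
  · fin_cases j <;> simp [algebraMap_eq, add_mul, sub_sub]
  · simp

noncomputable def kwShift (δ : k) :
    MvPolynomial (KWVars (fun _ : Fin d => 1) mu) k ≃ₐ[k]
      MvPolynomial (KWVars (fun _ : Fin d => 1) mu) k :=
  AlgEquiv.ofAlgHom (aeval (kwShiftVar δ)) (aeval (kwShiftVar (-δ)))
    (by rw [aeval_kwShiftVar_comp, add_neg_cancel, kwShiftVar_zero, aeval_X_left])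
    (by rw [aeval_kwShiftVar_comp, neg_add_cancel, kwShiftVar_zero, aeval_X_left])

lemma kwShift_preservesLinearForms (δ : k) :
    (kwShift (d := d) (mu := mu) δ).PreservesLinearForms :=
  .of_aeval (isHomogeneous_kwShiftVar δ) (isHomogeneous_kwShiftVar (-δ))
    (fun _ => rfl) (fun _ => rfl)

lemma kwShift_row0 (δ : k) (p : KWCols (fun _ : Fin d => 1) mu) :
    kwShift δ (KWrow0 k _ mu p) = KWrow0 k _ mu p := by
  rcases p with ⟨i, j⟩ | ⟨i, j⟩
  · fin_cases j
    exact aeval_X _ _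
  · exact aeval_X _ _

lemma kwShift_row1 (δ : k) (ε : Fin e → k) (p : KWCols (fun _ : Fin d => 1) mu) :
    kwShift δ (KWrow1 k _ mu ε p) =
      KWrow1 k _ mu (ε + fun _ => δ) p - C δ * KWrow0 k _ mu p := by
  rcases p with ⟨i, j⟩ | ⟨i, j⟩
  · fin_cases j
    exact aeval_X _ _
  · simp only [KWrow1, KWrow0, kwShift, AlgEquiv.ofAlgHom_apply, map_add, map_mul, aeval_C,
      algebraMap_eq, apply_dite (aeval _), aeval_X, kwShiftVar_inr, map_zero, Pi.add_apply]
    ring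

lemma kwShift_minor (δ : k) (ε : Fin e → k) (p q : KWCols (fun _ : Fin d => 1) mu) :
    kwShift δ (KWrow0 k _ mu p * KWrow1 k _ mu ε q - KWrow1 k _ mu ε p * KWrow0 k _ mu q) =
      KWrow0 k _ mu p * KWrow1 k _ mu (ε + fun _ => δ) q -
        KWrow1 k _ mu (ε + fun _ => δ) p * KWrow0 k _ mu q := by
  simp only [map_sub, map_mul, kwShift_row0, kwShift_row1]
  ring

lemma map_kwShift_kwIdeal (δ : k) (ε : Fin e → k) :
    (kwIdeal k (fun _ : Fin d => 1) mu ε).map (kwShift δ) =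
      kwIdeal k (fun _ : Fin d => 1) mu (ε + fun _ => δ) := by
  rw [kwIdeal, kwIdeal, Ideal.map_span]
  congr 1
  ext g
  constructor
  · rintro ⟨_, ⟨p, q, rfl⟩, rfl⟩
    exact ⟨p, q, kwShift_minor δ ε p q⟩
  · rintro ⟨p, q, rfl⟩
    exact ⟨_, ⟨p, q, rfl⟩, kwShift_minor δ ε p q⟩

end EigenvalueShift

theorem most_special_is_single_orbit_general (k : Type) [Field k]
    (c d : ℕ) (e : ℕ)
    (I J : Ideal (MvPolynomial (Fin (c + d + 1)) k))
    (hI : HasKWType k (c + d + 1) (fun _ : Fin d => 1) (fun _ : Fin 1 => e) I)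
    (hJ : HasKWType k (c + d + 1) (fun _ : Fin d => 1) (fun _ : Fin 1 => e) J) :
    ∃ φ : MvPolynomial (Fin (c + d + 1)) k ≃ₐ[k] MvPolynomial (Fin (c + d + 1)) k,
      (∀ f, f.IsHomogeneous 1 → (φ f).IsHomogeneous 1) ∧
      (∀ f, f.IsHomogeneous 1 → (φ.symm f).IsHomogeneous 1) ∧
      Ideal.map (φ : MvPolynomial (Fin (c + d + 1)) k →+*
        MvPolynomial (Fin (c + d + 1)) k) I = J := by
  obtain ⟨εI, -, ψI, hψI₁, hψI₂, hI⟩ := hI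
  obtain ⟨εJ, -, ψJ, hψJ₁, hψJ₂, hJ⟩ := hJ
  rw [Ideal.map_coe] at hI hJ
  have hε : εI + (fun _ => εJ 0 - εI 0) = εJ := by
    funext i
    fin_cases i
    simp
  obtain ⟨φ, hφ, hIJ⟩ :=
    exists_preservesLinearForms_map_eq ⟨hψI₁, hψI₂⟩ ⟨hψJ₁, hψJ₂⟩
      (kwShift_preservesLinearForms (εJ 0 - εI 0)) (by rw [hI, map_kwShift_kwIdeal, hε, hJ])
  exact ⟨φ, hφ.1, hφ.2, hIJ⟩

/-- **Uniqueness of the most special 2-determinantal ideal up to linear coordinate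
change.**  Let `c ≥ 2`, `0 ≤ d ≤ c`, `e = c−d+1`, and let `S` be a polynomial ring over
`k` in `c+d+1` variables.  If `I` and `J` are homogeneous ideals of `S` both of KW type
`((1,…,1); (e))` (with `d` parts equal to `1` and a single part `e`), then there is a
`k`-algebra automorphism `φ` of `S` mapping the space of linear forms bijectively onto
itself such that `φ(I) = J`. -/
theorem most_special_is_single_orbit (k : Type) [Field k] [IsAlgClosed k]
    (c d : ℕ) (hc : 2 ≤ c) (hdc : d ≤ c) (e : ℕ) (he : e = c - d + 1)
    (I J : Ideal (MvPolynomial (Fin (c + d + 1)) k))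
    (hI : HasKWType k (c + d + 1) (fun _ : Fin d => 1) (fun _ : Fin 1 => e) I)
    (hJ : HasKWType k (c + d + 1) (fun _ : Fin d => 1) (fun _ : Fin 1 => e) J) :
    ∃ φ : MvPolynomial (Fin (c + d + 1)) k ≃ₐ[k] MvPolynomial (Fin (c + d + 1)) k,
      (∀ f, f.IsHomogeneous 1 → (φ f).IsHomogeneous 1) ∧
      (∀ f, f.IsHomogeneous 1 → (φ.symm f).IsHomogeneous 1) ∧
      Ideal.map (φ : MvPolynomial (Fin (c + d + 1)) k →+*
        MvPolynomial (Fin (c + d + 1)) k) I = J :=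
  most_special_is_single_orbit_general k c d e I J hI hJ
end

section
/- For all column indices σ_1 < σ_2 < σ_3 < σ_4 of M, the following identity (the second Eagon–Northcott syzygy) holds in P: Σ_{i=1}^{4} (−1)^{i−1} ( M_{1,σ_i}·LEN(τ_i) + M_{2,σ_i}·UEN(τ_i) ) = 0, where τ_i denotes the increasing triple obtained from (σ_1,σ_2,σ_3,σ_4) by deleting σ_i. -/
open MvPolynomial

/-- The variable `T_{a,b}` (for `a < b`) in the polynomial ring
`R[T_{α,β} : 1 ≤ α < β ≤ m]`, whose variables are indexed by the pairs of column
indices `(a, b)` with `a < b`; out-of-range indices give `0`. -/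
noncomputable def Tvar {R : Type*} [CommRing R] {m : ℕ} (a b : Fin m) :
    MvPolynomial {q : Fin m × Fin m // q.1 < q.2} R :=
  if h : a < b then X ⟨(a, b), h⟩ else 0

/-- The upper Eagon–Northcott relation
`UEN(α,β,γ) = M_{1,α}T_{β,γ} − M_{1,β}T_{α,γ} + M_{1,γ}T_{α,β}`. -/
noncomputable def UEN {R : Type*} [CommRing R] {m : ℕ} (M : Fin 2 → Fin m → R)
    (a b c : Fin m) : MvPolynomial {q : Fin m × Fin m // q.1 < q.2} R :=
  C (M 0 a) * Tvar b c - C (M 0 b) * Tvar a c + C (M 0 c) * Tvar a b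

/-- The lower Eagon–Northcott relation
`LEN(α,β,γ) = M_{2,α}T_{β,γ} − M_{2,β}T_{α,γ} + M_{2,γ}T_{α,β}`. -/
noncomputable def LEN {R : Type*} [CommRing R] {m : ℕ} (M : Fin 2 → Fin m → R)
    (a b c : Fin m) : MvPolynomial {q : Fin m × Fin m // q.1 < q.2} R :=
  C (M 1 a) * Tvar b c - C (M 1 b) * Tvar a c + C (M 1 c) * Tvar a b

/-- **The second Eagon–Northcott syzygy.**
For column indices `σ₁ < σ₂ < σ₃ < σ₄` of a 2×m matrix `M` over a commutative ring,
`Σ_{i=1}^{4} (−1)^{i−1} ( M_{1,σ_i}·LEN(τ_i) + M_{2,σ_i}·UEN(τ_i) ) = 0` in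
`P = R[T_{α,β} : 1 ≤ α < β ≤ m]`, where `τ_i` is obtained from `(σ₁,σ₂,σ₃,σ₄)` by
deleting `σ_i`. -/
theorem second_eagon_northcott_syzygy {R : Type*} [CommRing R] (m : ℕ) (hm : 4 ≤ m)
    (M : Fin 2 → Fin m → R) (σ₁ σ₂ σ₃ σ₄ : Fin m)
    (h12 : σ₁ < σ₂) (h23 : σ₂ < σ₃) (h34 : σ₃ < σ₄) :
    (C (M 0 σ₁) * LEN M σ₂ σ₃ σ₄ + C (M 1 σ₁) * UEN M σ₂ σ₃ σ₄)
      - (C (M 0 σ₂) * LEN M σ₁ σ₃ σ₄ + C (M 1 σ₂) * UEN M σ₁ σ₃ σ₄)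
      + (C (M 0 σ₃) * LEN M σ₁ σ₂ σ₄ + C (M 1 σ₃) * UEN M σ₁ σ₂ σ₄)
      - (C (M 0 σ₄) * LEN M σ₁ σ₂ σ₃ + C (M 1 σ₄) * UEN M σ₁ σ₂ σ₃) = 0 := by
  simp only [UEN, LEN, map_sub, map_add, map_mul]
  ring
end

section
/- The ideal of S generated by all 2×2 minors of N equals the square of the ideal (x_1, …, x_p). -/
open MvPolynomial

/-- The top-row entry of the `2×(p+1)` matrix `N` over `k[x_1,…,x_p]` whose columns
(indexed by `0 ≤ t ≤ p`) are `(0, x_1)`, `(x_1, x_2)`, …, `(x_{p-1}, x_p)`, `(x_p, 0)`.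
Variables are `X ⟨j⟩` for `0 ≤ j ≤ p-1`, with `X ⟨j⟩` playing the role of `x_{j+1}`. -/
noncomputable def Nrow0 (k : Type) [Field k] (p : ℕ) (t : ℕ) : MvPolynomial (Fin p) k :=
  if h : 1 ≤ t ∧ t ≤ p then X ⟨t - 1, by omega⟩ else 0

/-- The bottom-row entry of the matrix `N`. -/
noncomputable def Nrow1 (k : Type) [Field k] (p : ℕ) (t : ℕ) : MvPolynomial (Fin p) k :=
  if h : t < p then X ⟨t, h⟩ else 0

lemma key (k : Type) [Field k] (p : ℕ) :
    ∀ n (i j : Fin p), i.val = n → i.val ≤ j.val →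
    (X i * X j : MvPolynomial (Fin p) k) ∈ Ideal.span {f : MvPolynomial (Fin p) k |
      ∃ s t : ℕ, s < t ∧ t ≤ p ∧
        f = Nrow0 k p s * Nrow1 k p t - Nrow1 k p s * Nrow0 k p t} := by
  intro n
  induction n using Nat.strong_induction_on with
  | _ n ih =>
    intro i j hi hij
    have hm : Nrow0 k p i.val * Nrow1 k p (j.val+1)
        - Nrow1 k p i.val * Nrow0 k p (j.val+1) ∈
        Ideal.span {f : MvPolynomial (Fin p) k | ∃ s t : ℕ, s < t ∧ t ≤ p ∧
          f = Nrow0 k p s * Nrow1 k p t - Nrow1 k p s * Nrow0 k p t} :=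
      Ideal.subset_span ⟨i.val, j.val+1, by omega, by omega, rfl⟩
    have h1 : Nrow1 k p i.val = X i := by
      rw [Nrow1, dif_pos i.isLt]
    have h2 : Nrow0 k p (j.val+1) = X j := by
      rw [Nrow0, dif_pos ⟨by omega, by omega⟩]
      exact congrArg X (Fin.ext (by simp))
    rw [h1, h2] at hm
    rcases Nat.eq_zero_or_pos i.val with h0 | h0
    · have hz : Nrow0 k p i.val = 0 := by rw [Nrow0, dif_neg (by omega)]
      rw [hz, zero_mul, zero_sub] at hm
      simpa using neg_mem hm
    · rcases eq_or_lt_of_le (Nat.succ_le_of_lt j.isLt) with hjp | hjp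
      · have hz : Nrow1 k p (j.val+1) = 0 := by rw [Nrow1, dif_neg (by omega)]
        rw [hz, mul_zero, zero_sub] at hm
        simpa using neg_mem hm
      · have h3 : Nrow0 k p i.val = X (⟨i.val - 1, by omega⟩ : Fin p) := by
          rw [Nrow0, dif_pos ⟨h0, by omega⟩]
        have h4 : Nrow1 k p (j.val+1) = X (⟨j.val + 1, hjp⟩ : Fin p) := by
          rw [Nrow1, dif_pos hjp]
        rw [h3, h4] at hm
        have hprev := ih (i.val - 1) (by omega) ⟨i.val - 1, by omega⟩
          ⟨j.val + 1, hjp⟩ rfl (by simp; omega)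
        have := Ideal.sub_mem _ hprev hm
        simpa using this


/-- **The ideal of 2×2 minors of the nilpotent block.**
For the `2×(p+1)` matrix `N` over `S = k[x_1,…,x_p]` with columns
`(0, x_1), (x_1, x_2), …, (x_{p-1}, x_p), (x_p, 0)`, the ideal generated by all
`2×2` minors of `N` equals the square of the ideal `(x_1, …, x_p)`. -/
theorem minors_of_nilpotent_block (k : Type) [Field k] (p : ℕ) (hp : 1 ≤ p) :
    Ideal.span {f : MvPolynomial (Fin p) k | ∃ s t : ℕ, s < t ∧ t ≤ p ∧
        f = Nrow0 k p s * Nrow1 k p t - Nrow1 k p s * Nrow0 k p t} =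
      (Ideal.span (Set.range (X : Fin p → MvPolynomial (Fin p) k))) ^ 2 := by
  apply le_antisymm
  · rw [Ideal.span_le]
    rintro f ⟨s, t, hst, htp, rfl⟩
    have hN0 : ∀ u, Nrow0 k p u ∈ Ideal.span (Set.range (X : Fin p → MvPolynomial (Fin p) k)) := by
      intro u; rw [Nrow0]; split_ifs with h
      · exact Ideal.subset_span ⟨_, rfl⟩
      · exact Ideal.zero_mem _
    have hN1 : ∀ u, Nrow1 k p u ∈ Ideal.span (Set.range (X : Fin p → MvPolynomial (Fin p) k)) := by
      intro u; rw [Nrow1]; split_ifs with h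
      · exact Ideal.subset_span ⟨_, rfl⟩
      · exact Ideal.zero_mem _
    rw [pow_two]
    exact Ideal.sub_mem _ (Ideal.mul_mem_mul (hN0 s) (hN1 t))
      (Ideal.mul_mem_mul (hN1 s) (hN0 t))
  · rw [pow_two, Ideal.span_mul_span', Ideal.span_le]
    rintro f hf
    rw [Set.mem_mul] at hf
    obtain ⟨a, ⟨i, rfl⟩, b, ⟨j, rfl⟩, rfl⟩ := hf
    rcases le_total i.val j.val with h | h
    · exact key k p i.val i j rfl h
    · rw [mul_comm]; exact key k p j.val j i rfl h
end
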